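/- Let k be a field, V a finite-dimensional k-vector space, b a nondegenerate alternating bilinear form on V, W ⊆ V a subspace, W' = W + W^⊥, and W₀ = W ∩ W^⊥. Then b induces a well-defined nondegenerate alternating form b' on W^⊥/W₀; every isometry g of (V, b) that fixes W pointwise preserves W^⊥ and W₀ and induces an isometry of (W^⊥/W₀, b'); the resulting group homomorphism from the group of isometries of (V, b) fixing W pointwise to the group of isometries of (W^⊥/W₀, b') is surjective; and its kernel consists exactly of those isometries g fixing W pointwise that satisfy (g − id_V)(W^⊥) ⊆ W₀. -/

import Mathlib

/-- The orthogonal complement `U^⊥ = {x : V | b (x, u) = 0 for all u ∈ U}` of a submodule `U`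
with respect to a bilinear form `b`. -/
def perp {k V : Type*} [Field k] [AddCommGroup V] [Module k V]
    (b : V →ₗ[k] V →ₗ[k] k) (U : Submodule k V) : Submodule k V where
  carrier := {x : V | ∀ u ∈ U, b x u = 0}
  add_mem' := by
    intro x y hx hy
    simp only [Set.mem_setOf_eq] at *
    intro u hu
    rw [map_add, LinearMap.add_apply, hx u hu, hy u hu, add_zero]
  zero_mem' := by
    simp only [Set.mem_setOf_eq]
    intro u hu
    simp
  smul_mem' := by
    intro c x hx
    simp only [Set.mem_setOf_eq] at *
    intro u hu
    rw [map_smul, LinearMap.smul_apply, hx u hu, smul_zero]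

variable {k V : Type*} [Field k] [AddCommGroup V] [Module k V]

/-- The quotient `W^⊥ / W₀`, where `W₀ = W ∩ W^⊥`. -/
abbrev WPerpQuot (b : V →ₗ[k] V →ₗ[k] k) (W : Submodule k V) :=
  ↥(perp b W) ⧸ (W ⊓ perp b W).comap (perp b W).subtype

/-- `g : V → V` induces `h : W^⊥/W₀ → W^⊥/W₀`. -/
def Induces (b : V →ₗ[k] V →ₗ[k] k) (W : Submodule k V)
    (g : V →ₗ[k] V) (h : WPerpQuot b W →ₗ[k] WPerpQuot b W) : Prop :=
  ∀ x y : ↥(perp b W), g (x : V) = (y : V) →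
    h (Submodule.Quotient.mk x) = Submodule.Quotient.mk y

/-- The set of isometries of `(V, b)` that fix `W` pointwise. -/
def FixSet (b : V →ₗ[k] V →ₗ[k] k) (W : Submodule k V) : Set (V →ₗ[k] V) :=
  {g : V →ₗ[k] V | Function.Bijective g ∧ (∀ x y : V, b (g x) (g y) = b x y) ∧
    ∀ x ∈ W, g x = x}

set_option linter.unusedSectionVars false
set_option maxHeartbeats 1000000

section Aux
variable {k V : Type*} [Field k] [AddCommGroup V] [Module k V]

lemma skew {b : V →ₗ[k] V →ₗ[k] k} (halt : ∀ x : V, b x x = 0) (x y : V) :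
    b x y = - b y x := by
  have h := halt (x + y)
  simp only [map_add, LinearMap.add_apply, halt] at h
  linear_combination h

lemma mem_perp {b : V →ₗ[k] V →ₗ[k] k} {U : Submodule k V} {x : V} :
    x ∈ perp b U ↔ ∀ u ∈ U, b x u = 0 := Iff.rfl

lemma perp_eq_orthogonal {b : V →ₗ[k] V →ₗ[k] k} (halt : ∀ x : V, b x x = 0)
    (U : Submodule k V) : perp b U = LinearMap.BilinForm.orthogonal b U := by
  have hr : b.IsRefl := LinearMap.IsAlt.isRefl halt
  ext x
  rw [mem_perp, LinearMap.BilinForm.mem_orthogonal_iff]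
  constructor
  · intro h u hu; exact hr x u (h u hu)
  · intro h u hu; exact hr u x (h u hu)

lemma perp_sup {b : V →ₗ[k] V →ₗ[k] k} (A B : Submodule k V) :
    perp b (A ⊔ B) = perp b A ⊓ perp b B := by
  ext x
  simp only [mem_perp, Submodule.mem_inf]
  constructor
  · intro h
    exact ⟨fun u hu => h u (Submodule.mem_sup_left hu),
      fun u hu => h u (Submodule.mem_sup_right hu)⟩
  · rintro ⟨h1, h2⟩ u hu
    rcases Submodule.mem_sup.mp hu with ⟨a, ha, c, hc, rfl⟩
    rw [map_add, h1 a ha, h2 c hc, add_zero]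

lemma perp_antitone {b : V →ₗ[k] V →ₗ[k] k} {A B : Submodule k V} (h : A ≤ B) :
    perp b B ≤ perp b A := fun _ hx u hu => hx u (h hu)

variable [FiniteDimensional k V]

lemma finrank_perp {b : V →ₗ[k] V →ₗ[k] k} (halt : ∀ x : V, b x x = 0)
    (hnd : ∀ x : V, (∀ y : V, b x y = 0) → x = 0) (U : Submodule k V) :
    Module.finrank k (perp b U) = Module.finrank k V - Module.finrank k U := by
  rw [perp_eq_orthogonal halt]
  exact LinearMap.BilinForm.finrank_orthogonal
    ((LinearMap.IsAlt.isRefl halt).nondegenerate_iff_separatingLeft.mpr hnd) U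

lemma perp_perp {b : V →ₗ[k] V →ₗ[k] k} (halt : ∀ x : V, b x x = 0)
    (hnd : ∀ x : V, (∀ y : V, b x y = 0) → x = 0) (U : Submodule k V) :
    perp b (perp b U) = U := by
  rw [perp_eq_orthogonal halt, perp_eq_orthogonal halt]
  exact LinearMap.BilinForm.orthogonal_orthogonal
    ((LinearMap.IsAlt.isRefl halt).nondegenerate_iff_separatingLeft.mpr hnd) (LinearMap.IsAlt.isRefl halt) U

lemma perp_inf {b : V →ₗ[k] V →ₗ[k] k} (halt : ∀ x : V, b x x = 0)
    (hnd : ∀ x : V, (∀ y : V, b x y = 0) → x = 0) (A B : Submodule k V) :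
    perp b (A ⊓ B) = perp b A ⊔ perp b B := by
  have hle : perp b A ⊔ perp b B ≤ perp b (A ⊓ B) :=
    sup_le (perp_antitone inf_le_left) (perp_antitone inf_le_right)
  refine (Submodule.eq_of_le_of_finrank_le hle ?_).symm
  have h1 := Submodule.finrank_sup_add_finrank_inf_eq A B
  have h2 := Submodule.finrank_sup_add_finrank_inf_eq (perp b A) (perp b B)
  rw [← perp_sup] at h2
  have e1 := finrank_perp halt hnd A
  have e2 := finrank_perp halt hnd B
  have e3 := finrank_perp halt hnd (A ⊓ B)
  have e4 := finrank_perp halt hnd (A ⊔ B)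
  have l1 : Module.finrank k A ≤ Module.finrank k V := Submodule.finrank_le A
  have l2 : Module.finrank k B ≤ Module.finrank k V := Submodule.finrank_le B
  have l3 : Module.finrank k (A ⊓ B : Submodule k V) ≤ Module.finrank k V :=
    Submodule.finrank_le _
  have l4 : Module.finrank k (A ⊔ B : Submodule k V) ≤ Module.finrank k V :=
    Submodule.finrank_le _
  omega

end Aux

section BQ
variable {k V : Type*} [Field k] [AddCommGroup V] [Module k V]
variable (b : V →ₗ[k] V →ₗ[k] k) (W : Submodule k V)

lemma bQ_ker1 (halt : ∀ x : V, b x x = 0) :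
    (W ⊓ perp b W).comap (perp b W).subtype ≤
      LinearMap.ker (b.compl₁₂ (perp b W).subtype (perp b W).subtype) := by
  intro x hx
  replace hx : (x:V) ∈ W ⊓ perp b W := hx
  rw [LinearMap.mem_ker]
  ext y
  simp only [LinearMap.compl₁₂_apply, LinearMap.zero_apply, Submodule.coe_subtype]
  rw [skew halt, y.2 _ hx.1, neg_zero]

lemma bQ_ker2 (halt : ∀ x : V, b x x = 0) :
    (W ⊓ perp b W).comap (perp b W).subtype ≤
      LinearMap.ker (Submodule.liftQ _ _ (bQ_ker1 b W halt)).flip := by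
  intro x hx
  replace hx : (x:V) ∈ W ⊓ perp b W := hx
  rw [LinearMap.mem_ker]
  refine LinearMap.ext fun q => ?_
  obtain ⟨y, rfl⟩ := Submodule.Quotient.mk_surjective _ q
  simp only [LinearMap.flip_apply, LinearMap.zero_apply, Submodule.liftQ_apply,
    LinearMap.compl₁₂_apply, Submodule.coe_subtype]
  exact y.2 _ hx.1

/-- The induced form on the quotient `W^⊥/W₀`. -/
noncomputable def bQ (halt : ∀ x : V, b x x = 0) :
    WPerpQuot b W →ₗ[k] WPerpQuot b W →ₗ[k] k :=
  (Submodule.liftQ _ _ (bQ_ker2 b W halt)).flip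

lemma bQ_apply (halt : ∀ x : V, b x x = 0) (x y : ↥(perp b W)) :
    bQ b W halt (Submodule.Quotient.mk x) (Submodule.Quotient.mk y) = b ↑x ↑y := by
  simp only [bQ, Submodule.liftQ_apply, LinearMap.flip_apply, LinearMap.compl₁₂_apply,
    Submodule.coe_subtype]

lemma fix_preserves {g : V →ₗ[k] V} (hg : g ∈ FixSet b W) :
    ∀ x ∈ perp b W, g x ∈ perp b W := by
  intro x hx u hu
  rw [← hg.2.2 u hu, hg.2.1 x u]
  exact hx u hu

/-- The induced map on the quotient. -/
noncomputable def hInd {g : V →ₗ[k] V} (hg : g ∈ FixSet b W) :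
    WPerpQuot b W →ₗ[k] WPerpQuot b W :=
  Submodule.liftQ _
    (((W ⊓ perp b W).comap (perp b W).subtype).mkQ ∘ₗ
      g.restrict (fun x hx => fix_preserves b W hg x hx)) (by
    intro x hx
    replace hx : (x:V) ∈ W ⊓ perp b W := hx
    simp only [LinearMap.mem_ker, LinearMap.comp_apply, Submodule.mkQ_apply,
      Submodule.Quotient.mk_eq_zero]
    show g (x:V) ∈ W ⊓ perp b W
    rw [hg.2.2 _ hx.1]
    exact hx)

lemma hInd_apply {g : V →ₗ[k] V} (hg : g ∈ FixSet b W) (x : ↥(perp b W)) :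
    hInd b W hg (Submodule.Quotient.mk x) =
      Submodule.Quotient.mk ⟨g ↑x, fix_preserves b W hg ↑x x.2⟩ := by
  simp only [hInd, Submodule.liftQ_apply, LinearMap.comp_apply, Submodule.mkQ_apply]
  rfl

lemma hInd_induces {g : V →ₗ[k] V} (hg : g ∈ FixSet b W) : Induces b W g (hInd b W hg) := by
  intro x y hxy
  rw [hInd_apply]
  congr 1
  exact Subtype.ext hxy

end BQ


section Surj
variable {k V : Type*} [Field k] [AddCommGroup V] [Module k V]

lemma exists_eps {X : Type*} [AddCommGroup X] [Module k X] [FiniteDimensional k X]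
    (δ : X →ₗ[k] X →ₗ[k] k) (hδ : ∀ x, δ x x = 0) :
    ∃ ε : X →ₗ[k] X →ₗ[k] k, ∀ x y, ε x y - ε y x = δ x y := by
  classical
  set bb := Module.finBasis k X with hbb
  set N : Matrix (Fin (Module.finrank k X)) (Fin (Module.finrank k X)) k :=
    fun i j => if i < j then δ (bb i) (bb j) else 0 with hN
  set ε := (LinearMap.toMatrix₂ bb bb).symm N with hε
  have hεb : ∀ i j, ε (bb i) (bb j) = N i j := by
    intro i j
    rw [← LinearMap.toMatrix₂_apply bb bb, hε, LinearEquiv.apply_symm_apply]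
  have key : ε - ε.flip = δ := by
    apply (LinearMap.toMatrix₂ bb bb).injective
    ext i j
    simp only [LinearMap.toMatrix₂_apply, LinearMap.sub_apply, LinearMap.flip_apply]
    rw [hεb, hεb, hN]
    simp only
    rcases lt_trichotomy i j with h | h | h
    · rw [if_pos h, if_neg (not_lt.mpr h.le), sub_zero]
    · subst h
      rw [if_neg (lt_irrefl i), sub_zero, hδ]
    · rw [if_neg (not_lt.mpr h.le), if_pos h, zero_sub, ← skew hδ]
  refine ⟨ε, fun x y => ?_⟩
  have := LinearMap.ext_iff.mp (LinearMap.ext_iff.mp key x) y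
  simpa using this



variable [FiniteDimensional k V]
variable (b : V →ₗ[k] V →ₗ[k] k) (W : Submodule k V)

lemma bQ_nondeg (halt : ∀ x : V, b x x = 0) (hnd : ∀ x : V, (∀ y : V, b x y = 0) → x = 0)
    (u : WPerpQuot b W) (hu : ∀ v : WPerpQuot b W, bQ b W halt u v = 0) : u = 0 := by
  obtain ⟨x, rfl⟩ := Submodule.Quotient.mk_surjective _ u
  have hx : (x:V) ∈ W := by
    have hmem : (x:V) ∈ perp b (perp b W) := by
      intro y hy
      have := hu (Submodule.Quotient.mk ⟨y, hy⟩)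
      rwa [bQ_apply] at this
    rwa [perp_perp halt hnd W] at hmem
  rw [Submodule.Quotient.mk_eq_zero]
  exact ⟨hx, x.2⟩

lemma surj_lift (halt : ∀ x : V, b x x = 0) (hnd : ∀ x : V, (∀ y : V, b x y = 0) → x = 0)
    (h : WPerpQuot b W →ₗ[k] WPerpQuot b W) (hbij : Function.Bijective h)
    (hiso : ∀ u v : WPerpQuot b W, bQ b W halt (h u) (h v) = bQ b W halt u v) :
    ∃ g ∈ FixSet b W, Induces b W g h := by
  classical
  set P := perp b W with hPdef
  set W0V := W ⊓ P with hW0Vdef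
  set W0 : Submodule k ↥P := W0V.comap P.subtype with hW0def
  -- complements
  obtain ⟨U', hU'c⟩ := Submodule.exists_isCompl W0
  set U : Submodule k V := U'.map P.subtype with hUdef
  obtain ⟨X, hXc⟩ := Submodule.exists_isCompl (W ⊔ P)
  have hUP : U ≤ P := Submodule.map_subtype_le P U'
  have hW0W : W0V ≤ W := inf_le_left
  have hW0P : W0V ≤ P := inf_le_right
  have hUsup : U ⊔ W0V = P := by
    have h1 : U'.map P.subtype ⊔ W0.map P.subtype = (U' ⊔ W0).map P.subtype :=
      (Submodule.map_sup _ _ _).symm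
    have hsup' : U' ⊔ W0 = ⊤ := by rw [sup_comm]; exact hU'c.sup_eq_top
    rw [hsup', Submodule.map_top, Submodule.range_subtype] at h1
    rw [hW0def, Submodule.map_comap_subtype, inf_of_le_right hW0P] at h1
    exact h1
  have hUW0 : ∀ x : V, x ∈ U → x ∈ W0V → x = 0 := by
    intro x hxU hxW0
    obtain ⟨y, hy, rfl⟩ := hxU
    have : y ∈ W0 := hxW0
    have : y ∈ W0 ⊓ U' := ⟨this, hy⟩
    rw [hU'c.inf_eq_bot] at this
    rw [this]; rfl
  have hUW : ∀ x : V, x ∈ U → x ∈ W → x = 0 := fun x hxU hxW =>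
    hUW0 x hxU ⟨hxW, hUP hxU⟩
  have hWUsup : W ⊔ U = W ⊔ P := by
    rw [← hUsup, sup_comm U W0V, ← sup_assoc, sup_eq_left.mpr hW0W]
  have hXdisj : ∀ x : V, x ∈ W ⊔ P → x ∈ X → x = 0 :=
    fun x h1 h2 => Submodule.disjoint_def.mp hXc.disjoint x h1 h2
  have hWc : IsCompl W (U ⊔ X) := by
    constructor
    · rw [Submodule.disjoint_def]
      intro a haW haUX
      obtain ⟨u, hu, x, hx, rfl⟩ := Submodule.mem_sup.mp haUX
      have hxz : x = 0 := by
        refine hXdisj x ?_ hx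
        have : x = (u + x) - u := by abel
        rw [this]
        exact Submodule.sub_mem _ (Submodule.mem_sup_left haW)
          (Submodule.mem_sup_right (hUP hu))
      rw [hxz, add_zero] at haW ⊢
      exact hUW u hu haW
    · rw [codisjoint_iff, ← sup_assoc, hWUsup, hXc.sup_eq_top]
  have hUc : IsCompl U (W ⊔ X) := by
    constructor
    · rw [Submodule.disjoint_def]
      intro a haU haWX
      obtain ⟨w, hw, x, hx, rfl⟩ := Submodule.mem_sup.mp haWX
      have hxz : x = 0 := by
        refine hXdisj x ?_ hx
        have : x = (w + x) - w := by abel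
        rw [this]
        exact Submodule.sub_mem _ (Submodule.mem_sup_right (hUP haU))
          (Submodule.mem_sup_left hw)
      rw [hxz, add_zero] at haU ⊢
      exact hUW w haU hw
    · rw [codisjoint_iff, ← sup_assoc, sup_comm U W, hWUsup, hXc.sup_eq_top]
  set πW := Submodule.linearProjOfIsCompl W (U ⊔ X) hWc with hπW
  set πU := Submodule.linearProjOfIsCompl U (W ⊔ X) hUc with hπU
  set πX := Submodule.linearProjOfIsCompl X (W ⊔ P) hXc.symm with hπX
  have hdec : ∀ (w u x : V) (hw : w ∈ W) (hu : u ∈ U) (hx : x ∈ X),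
      πW (w + u + x) = ⟨w, hw⟩ ∧ πU (w + u + x) = ⟨u, hu⟩ ∧ πX (w + u + x) = ⟨x, hx⟩ := by
    intro w u x hw hu hx
    refine ⟨?_, ?_, ?_⟩
    · have e1 : πW w = ⟨w, hw⟩ := Submodule.linearProjOfIsCompl_apply_left hWc ⟨w, hw⟩
      have e2 : πW u = 0 :=
        Submodule.linearProjOfIsCompl_apply_right' hWc (Submodule.mem_sup_left hu)
      have e3 : πW x = 0 :=
        Submodule.linearProjOfIsCompl_apply_right' hWc (Submodule.mem_sup_right hx)
      rw [map_add, map_add, e1, e2, e3, add_zero, add_zero]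
    · have e1 : πU w = 0 :=
        Submodule.linearProjOfIsCompl_apply_right' hUc (Submodule.mem_sup_left hw)
      have e2 : πU u = ⟨u, hu⟩ := Submodule.linearProjOfIsCompl_apply_left hUc ⟨u, hu⟩
      have e3 : πU x = 0 :=
        Submodule.linearProjOfIsCompl_apply_right' hUc (Submodule.mem_sup_right hx)
      rw [map_add, map_add, e1, e2, e3, add_zero, zero_add]
    · have e1 : πX w = 0 :=
        Submodule.linearProjOfIsCompl_apply_right' hXc.symm (Submodule.mem_sup_left hw)
      have e2 : πX u = 0 :=
        Submodule.linearProjOfIsCompl_apply_right' hXc.symm (Submodule.mem_sup_right (hUP hu))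
      have e3 : πX x = ⟨x, hx⟩ := Submodule.linearProjOfIsCompl_apply_left hXc.symm ⟨x, hx⟩
      rw [map_add, map_add, e1, e2, e3, zero_add, zero_add]
  have hsum : ∀ v : V, ((πW v : V) + (πU v : V)) + (πX v : V) = v := by
    intro v
    have hv : v ∈ W ⊔ (U ⊔ X) := by rw [hWc.sup_eq_top]; trivial
    obtain ⟨w, hw, y, hy, hv'⟩ := Submodule.mem_sup.mp hv
    obtain ⟨u, hu, x, hx, hy'⟩ := Submodule.mem_sup.mp hy
    have hveq : v = w + u + x := by rw [← hv', ← hy', add_assoc]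
    obtain ⟨e1, e2, e3⟩ := hdec w u x hw hu hx
    rw [hveq, e1, e2, e3]
  -- quotient is isomorphic to U
  set qUl : ↥U →ₗ[k] WPerpQuot b W := W0.mkQ ∘ₗ Submodule.inclusion hUP with hqUl
  have hq : ∀ u : ↥U, qUl u = Submodule.Quotient.mk ⟨↑u, hUP u.2⟩ := fun u => rfl
  have hqbij : Function.Bijective qUl := by
    constructor
    · rw [← LinearMap.ker_eq_bot, Submodule.eq_bot_iff]
      intro u hu
      rw [LinearMap.mem_ker, hq, Submodule.Quotient.mk_eq_zero] at hu
      replace hu : (u : V) ∈ W0V := hu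
      exact Subtype.ext (hUW0 ↑u u.2 hu)
    · intro q
      obtain ⟨y, rfl⟩ := Submodule.Quotient.mk_surjective _ q
      have hy : (y : V) ∈ U ⊔ W0V := by rw [hUsup]; exact y.2
      obtain ⟨u, hu, w0, hw0, hyeq⟩ := Submodule.mem_sup.mp hy
      refine ⟨⟨u, hu⟩, ?_⟩
      rw [hq, Submodule.Quotient.eq]
      have hmem : (u : V) - (y : V) ∈ W0V := by
        have he2 : (u : V) - (y : V) = -w0 := by rw [← hyeq]; abel
        rw [he2]; exact Submodule.neg_mem _ hw0
      exact hmem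
  set qU := LinearEquiv.ofBijective qUl hqbij with hqU
  set hE := LinearEquiv.ofBijective h hbij with hhE
  set hUe : ↥U ≃ₗ[k] ↥U := (qU.trans hE).trans qU.symm with hhUe
  have hUq : ∀ u : ↥U, Submodule.Quotient.mk (⟨↑(hUe u), hUP (hUe u).2⟩ : ↥P) =
      h (Submodule.Quotient.mk (⟨↑u, hUP u.2⟩ : ↥P)) := by
    intro u
    rw [← hq, ← hq]
    show qUl (qU.symm (hE (qU u))) = h (qUl u)
    have : qUl (qU.symm (hE (qU u))) = qU (qU.symm (hE (qU u))) := rfl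
    rw [this, LinearEquiv.apply_symm_apply]
    rfl
  have hUiso : ∀ u v : ↥U, b ↑(hUe u) ↑(hUe v) = b ↑u ↑v := by
    intro u v
    have h1 := bQ_apply b W halt ⟨↑(hUe u), hUP (hUe u).2⟩ ⟨↑(hUe v), hUP (hUe v).2⟩
    have h2 := bQ_apply b W halt ⟨↑u, hUP u.2⟩ ⟨↑v, hUP v.2⟩
    rw [← h1, ← h2, hUq, hUq, hiso]
  have hUnd : ∀ u : ↥U, (∀ v : ↥U, b ↑u ↑v = 0) → u = 0 := by
    intro u hu
    have hz : Submodule.Quotient.mk (⟨↑u, hUP u.2⟩ : ↥P) = (0 : WPerpQuot b W) := by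
      apply bQ_nondeg b W halt hnd
      intro q
      obtain ⟨y, rfl⟩ := Submodule.Quotient.mk_surjective _ q
      rw [bQ_apply]
      have hy : (y : V) ∈ U ⊔ W0V := by rw [hUsup]; exact y.2
      obtain ⟨u', hu', w0, hw0, hyeq⟩ := Submodule.mem_sup.mp hy
      rw [← hyeq, map_add, hu ⟨u', hu'⟩, zero_add]
      exact (hUP u.2) w0 hw0.1
    rw [Submodule.Quotient.mk_eq_zero] at hz
    replace hz : (u : V) ∈ W0V := hz
    exact Subtype.ext (hUW0 ↑u u.2 hz)
  -- dual isomorphism on U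
  set bUf : ↥U →ₗ[k] Module.Dual k ↥U := (b.compl₁₂ U.subtype U.subtype).flip with hbUf
  have hbUfinj : Function.Injective bUf := by
    rw [← LinearMap.ker_eq_bot, Submodule.eq_bot_iff]
    intro u hu
    rw [LinearMap.mem_ker] at hu
    apply hUnd
    intro v
    have h2 := LinearMap.ext_iff.mp hu v
    simp only [hbUf, LinearMap.flip_apply, LinearMap.compl₁₂_apply, LinearMap.zero_apply,
      Submodule.coe_subtype] at h2
    rw [skew halt, h2, neg_zero]
  have hbUfsurj : Function.Surjective bUf :=
    (LinearMap.injective_iff_surjective_of_finrank_eq_finrank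
      (Subspace.dual_finrank_eq (K := k) (V := ↥U)).symm).mp hbUfinj
  set FU := LinearEquiv.ofBijective bUf ⟨hbUfinj, hbUfsurj⟩ with hFU
  -- the correction d : X → U
  set Φ : ↥X →ₗ[k] Module.Dual k ↥U :=
    (b.compl₁₂ (U.subtype ∘ₗ hUe.symm.toLinearMap) X.subtype).flip
      - (b.compl₁₂ U.subtype X.subtype).flip with hΦ
  set d : ↥X →ₗ[k] ↥U := FU.symm.toLinearMap ∘ₗ Φ with hdd
  have hdprop : ∀ (x : ↥X) (v : ↥U), b ↑v ↑(d x) = b ↑(hUe.symm v) ↑x - b ↑v ↑x := by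
    intro x v
    have h1 : bUf (d x) = Φ x := by
      have : bUf (FU.symm (Φ x)) = FU (FU.symm (Φ x)) := rfl
      rw [hdd]
      simp only [LinearMap.comp_apply, LinearEquiv.coe_coe]
      rw [this, LinearEquiv.apply_symm_apply]
    have h2 := LinearMap.ext_iff.mp h1 v
    simp only [hbUf, hΦ, LinearMap.flip_apply, LinearMap.compl₁₂_apply, LinearMap.sub_apply,
      LinearMap.comp_apply, LinearEquiv.coe_coe, Submodule.coe_subtype] at h2
    exact h2
  have hD : ∀ (u : ↥U) (x : ↥X), b ↑(hUe u) (↑x + ↑(d x)) = b ↑u ↑x := by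
    intro u x
    rw [map_add]
    have h1 := hdprop x (hUe u)
    rw [LinearEquiv.symm_apply_apply] at h1
    rw [h1]; ring
  -- dual pairing between W0V and X
  set pW0 : ↥W0V →ₗ[k] Module.Dual k ↥X := b.compl₁₂ W0V.subtype X.subtype with hpW0
  have hpinj : Function.Injective pW0 := by
    rw [← LinearMap.ker_eq_bot, Submodule.eq_bot_iff]
    intro w0 hw0
    rw [LinearMap.mem_ker] at hw0
    have hzero : ∀ y : V, b ↑w0 y = 0 := by
      intro y
      have hy : y ∈ (W ⊔ P) ⊔ X := by rw [hXc.sup_eq_top]; trivial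
      obtain ⟨wp, hwp, x, hx, rfl⟩ := Submodule.mem_sup.mp hy
      obtain ⟨w, hw, p, hp, rfl⟩ := Submodule.mem_sup.mp hwp
      have e1 : b ↑w0 w = 0 := (hW0P w0.2) w hw
      have e2 : b ↑w0 p = 0 := by
        rw [skew halt, (hp : ∀ u ∈ W, b p u = 0) ↑w0 w0.2.1, neg_zero]
      have e3 : b ↑w0 x = 0 := by
        have := LinearMap.ext_iff.mp hw0 ⟨x, hx⟩
        simpa [hpW0, LinearMap.compl₁₂_apply] using this
      rw [map_add, map_add, e1, e2, e3, add_zero, add_zero]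
    exact Subtype.ext (hnd ↑w0 hzero)
  have hdim : Module.finrank k ↥W0V = Module.finrank k (Module.Dual k ↥X) := by
    rw [Subspace.dual_finrank_eq]
    have h1 : Module.finrank k ↥(W ⊔ P) + Module.finrank k ↥X = Module.finrank k V :=
      Submodule.finrank_add_eq_of_isCompl hXc
    have h2 : W0V = perp b (W ⊔ P) := by
      rw [hPdef, perp_sup, perp_perp halt hnd W, hW0Vdef, hPdef]
      exact inf_comm _ _
    have h3 := finrank_perp halt hnd (W ⊔ P)
    rw [← h2] at h3
    have h4 : Module.finrank k ↥(W ⊔ P) ≤ Module.finrank k V := Submodule.finrank_le _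
    omega
  have hpsurj := (LinearMap.injective_iff_surjective_of_finrank_eq_finrank hdim).mp hpinj
  set FW0 := LinearEquiv.ofBijective pW0 ⟨hpinj, hpsurj⟩ with hFW0
  -- the correction e : X → W0V
  set δbil : ↥X →ₗ[k] ↥X →ₗ[k] k :=
    b.compl₁₂ (U.subtype ∘ₗ d) (U.subtype ∘ₗ d) + b.compl₁₂ (U.subtype ∘ₗ d) X.subtype
      + b.compl₁₂ X.subtype (U.subtype ∘ₗ d) with hδbil
  have hδapp : ∀ x y : ↥X, δbil x y = b ↑(d x) ↑(d y) + b ↑(d x) ↑y + b ↑x ↑(d y) := by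
    intro x y
    simp [hδbil, LinearMap.compl₁₂_apply, LinearMap.add_apply]
  have hδalt : ∀ x : ↥X, (-δbil) x x = 0 := by
    intro x
    have h1 : δbil x x = 0 := by
      rw [hδapp, halt, skew halt (↑x : V) ↑(d x)]; ring
    simp [h1]
  obtain ⟨ε, hε⟩ := exists_eps (-δbil) hδalt
  set e : ↥X →ₗ[k] ↥W0V := FW0.symm.toLinearMap ∘ₗ ε with hee
  have heprop : ∀ x y : ↥X, b ↑(e x) ↑y = ε x y := by
    intro x y
    have h1 : pW0 (e x) = ε x := by
      have : pW0 (FW0.symm (ε x)) = FW0 (FW0.symm (ε x)) := rfl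
      rw [hee]
      simp only [LinearMap.comp_apply, LinearEquiv.coe_coe]
      rw [this, LinearEquiv.apply_symm_apply]
    have h2 := LinearMap.ext_iff.mp h1 y
    simpa [hpW0, LinearMap.compl₁₂_apply] using h2
  have hE2 : ∀ x y : ↥X, b ↑(e x) ↑y - b ↑(e y) ↑x = -(δbil x y) := by
    intro x y
    rw [heprop, heprop]
    simpa using hε x y
  -- the lifted isometry g
  set g : V →ₗ[k] V :=
    W.subtype ∘ₗ πW + U.subtype ∘ₗ hUe.toLinearMap ∘ₗ πU + X.subtype ∘ₗ πX
      + U.subtype ∘ₗ d ∘ₗ πX + W0V.subtype ∘ₗ e ∘ₗ πX with hg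
  have hgapp : ∀ v : V,
      g v = ↑(πW v) + ↑(hUe (πU v)) + ↑(πX v) + ↑(d (πX v)) + ↑(e (πX v)) := by
    intro v
    simp [hg, LinearMap.add_apply, LinearMap.comp_apply, Submodule.coe_subtype,
      LinearEquiv.coe_coe]
  have hgiso : ∀ v v' : V, b (g v) (g v') = b v v' := by
    intro v v'
    rw [hgapp v, hgapp v']
    conv_rhs => rw [← hsum v, ← hsum v']
    set w := πW v with hw; set u := πU v with hu; set x := πX v with hx
    set w' := πW v' with hw'; set u' := πU v' with hu'; set x' := πX v' with hx'
    have hPW : ∀ p : V, p ∈ P → ∀ a : V, a ∈ W → b p a = 0 := fun p hp a ha => hp a ha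
    have hWP : ∀ a : V, a ∈ W → ∀ p : V, p ∈ P → b a p = 0 := by
      intro a ha p hp; rw [skew halt, hPW p hp a ha, neg_zero]
    have mA2 : (↑(hUe u) : V) ∈ P := hUP (hUe u).2
    have mA4 : (↑(d x) : V) ∈ P := hUP (d x).2
    have mA5W : (↑(e x) : V) ∈ W := hW0W (e x).2
    have mA5P : (↑(e x) : V) ∈ P := hW0P (e x).2
    have mB2 : (↑(hUe u') : V) ∈ P := hUP (hUe u').2
    have mB4 : (↑(d x') : V) ∈ P := hUP (d x').2
    have mB5W : (↑(e x') : V) ∈ W := hW0W (e x').2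
    have mB5P : (↑(e x') : V) ∈ P := hW0P (e x').2
    have muP : (↑u : V) ∈ P := hUP u.2
    have mu'P : (↑u' : V) ∈ P := hUP u'.2
    -- vanishing terms of LHS
    have z1 : b ↑w ↑(hUe u') = 0 := hWP ↑w w.2 _ mB2
    have z2 : b ↑w ↑(d x') = 0 := hWP ↑w w.2 _ mB4
    have z3 : b ↑w ↑(e x') = 0 := hWP ↑w w.2 _ mB5P
    have z4 : b ↑(hUe u) ↑w' = 0 := hPW _ mA2 ↑w' w'.2
    have z5 : b ↑(hUe u) ↑(e x') = 0 := hPW _ mA2 _ mB5W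
    have z6 : b ↑(d x) ↑w' = 0 := hPW _ mA4 ↑w' w'.2
    have z7 : b ↑(d x) ↑(e x') = 0 := hPW _ mA4 _ mB5W
    have z8 : b ↑(e x) ↑w' = 0 := hPW _ mA5P ↑w' w'.2
    have z9 : b ↑(e x) ↑(hUe u') = 0 := hWP _ mA5W _ mB2
    have z10 : b ↑(e x) ↑(d x') = 0 := hWP _ mA5W _ mB4
    have z11 : b ↑(e x) ↑(e x') = 0 := hPW _ mA5P _ mB5W
    -- vanishing terms of RHS
    have z12 : b ↑w ↑u' = 0 := hWP ↑w w.2 _ mu'P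
    have z13 : b ↑u ↑w' = 0 := hPW _ muP ↑w' w'.2
    -- identities
    have I1 : b ↑(hUe u) ↑(hUe u') = b ↑u ↑u' := hUiso u u'
    have I2 : b ↑(hUe u) ↑x' + b ↑(hUe u) ↑(d x') = b ↑u ↑x' := by
      have h1 := hD u x'
      rwa [map_add] at h1
    have I3 : b (↑x : V) ↑(hUe u') + b ↑(d x) ↑(hUe u') = b ↑x ↑u' := by
      have h1 := hD u' x
      rw [map_add] at h1
      rw [skew halt (↑x : V) ↑(hUe u'), skew halt (↑(d x) : V) ↑(hUe u'),
        skew halt (↑x : V) ↑u']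
      linear_combination -h1
    have I5 : b (↑x : V) ↑(d x') + b ↑(d x) ↑x' + b ↑(d x) ↑(d x') + b ↑(e x) ↑x'
        + b (↑x : V) ↑(e x') = 0 := by
      have h1 := hE2 x x'
      have h2 := hδapp x x'
      rw [skew halt (↑x : V) ↑(e x')]
      linear_combination h1 - h2
    simp only [map_add, LinearMap.add_apply]
    linear_combination z1 + z2 + z3 + z4 + z5 + z6 + z7 + z8 + z9 + z10 + z11
      - z12 - z13 + I1 + I2 + I3 + I5
  have hginj : Function.Injective g := by
    rw [← LinearMap.ker_eq_bot, Submodule.eq_bot_iff]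
    intro v hv
    rw [LinearMap.mem_ker] at hv
    apply hnd
    intro y
    have h1 := hgiso v y
    rw [hv] at h1
    simpa using h1.symm
  have hgsurj : Function.Surjective g := LinearMap.injective_iff_surjective.mp hginj
  have hgW : ∀ a ∈ W, g a = a := by
    intro a ha
    have hdec0 := hdec a 0 0 ha (Submodule.zero_mem U) (Submodule.zero_mem X)
    rw [add_zero, add_zero] at hdec0
    obtain ⟨e1, e2, e3⟩ := hdec0
    have e2' : πU a = 0 := by rw [e2]; rfl
    have e3' : πX a = 0 := by rw [e3]; rfl
    rw [hgapp, e1, e2', e3']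
    simp
  have hind : Induces b W g h := by
    intro p y hgp
    have hp : (p : V) ∈ U ⊔ W0V := by rw [hUsup]; exact p.2
    obtain ⟨u, hu, w0, hw0, hpe⟩ := Submodule.mem_sup.mp hp
    have hpval : (p : V) = w0 + u := by rw [← hpe]; exact (add_comm u w0)
    have hdw := hdec w0 u 0 (hW0W hw0) hu (Submodule.zero_mem X)
    rw [add_zero] at hdw
    obtain ⟨e1, e2, e3⟩ := hdw
    have e3' : πX (w0 + u) = 0 := by rw [e3]; rfl
    have hgp2 : g (p : V) = w0 + ↑(hUe ⟨u, hu⟩) := by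
      rw [hpval, hgapp, e1, e2, e3']
      simp
    have hq1 : (Submodule.Quotient.mk p : WPerpQuot b W) =
        Submodule.Quotient.mk ⟨u, hUP hu⟩ := by
      rw [Submodule.Quotient.eq]
      have hmem : (p : V) - u ∈ W0V := by
        have : (p : V) - u = w0 := by rw [hpval]; abel
        rw [this]; exact hw0
      exact hmem
    rw [hq1, ← hUq ⟨u, hu⟩, Submodule.Quotient.eq]
    have hmem2 : (↑(hUe ⟨u, hu⟩) : V) - ↑y ∈ W0V := by
      rw [← hgp, hgp2]
      have : (↑(hUe ⟨u, hu⟩) : V) - (w0 + ↑(hUe ⟨u, hu⟩)) = -w0 := by abel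
      rw [this]
      exact Submodule.neg_mem _ hw0
    exact hmem2
  exact ⟨g, ⟨⟨hginj, hgsurj⟩, hgiso, hgW⟩, hind⟩
end Surj

/-- Let `b` be a nondegenerate alternating form on a finite-dimensional vector
space `V`, `W ⊆ V` a subspace, `W' = W + W^⊥`, `W₀ = W ∩ W^⊥`.  Then `b` induces a well-defined
nondegenerate alternating form `b'` on `W^⊥/W₀`; every isometry of `(V, b)` fixing `W`
pointwise preserves `W^⊥` and `W₀` and induces an isometry of `(W^⊥/W₀, b')`; the resulting
group homomorphism is surjective; and its kernel consists exactly of those isometries `g`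
fixing `W` pointwise with `(g - id) (W^⊥) ⊆ W₀`. -/
theorem statement10 [FiniteDimensional k V]
    (b : V →ₗ[k] V →ₗ[k] k)
    (halt : ∀ x : V, b x x = 0)
    (hnd : ∀ x : V, (∀ y : V, b x y = 0) → x = 0)
    (W : Submodule k V) :
    ∃ b' : WPerpQuot b W →ₗ[k] WPerpQuot b W →ₗ[k] k,
      -- `b'` is induced by `b`, alternating, and nondegenerate
      (∀ x y : ↥(perp b W),
        b' (Submodule.Quotient.mk x) (Submodule.Quotient.mk y) = b (x : V) (y : V)) ∧
      (∀ u : WPerpQuot b W, b' u u = 0) ∧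
      (∀ u : WPerpQuot b W, (∀ v : WPerpQuot b W, b' u v = 0) → u = 0) ∧
      -- isometries fixing `W` pointwise preserve `W^⊥` and `W₀`
      (∀ g ∈ FixSet b W, (∀ x ∈ perp b W, g x ∈ perp b W) ∧
        ∀ x ∈ W ⊓ perp b W, g x ∈ W ⊓ perp b W) ∧
      -- every such isometry induces an isometry of the quotient
      (∀ g ∈ FixSet b W, ∃ h : WPerpQuot b W →ₗ[k] WPerpQuot b W,
        Function.Bijective h ∧ (∀ u v : WPerpQuot b W, b' (h u) (h v) = b' u v) ∧
        Induces b W g h) ∧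
      -- the assignment is a group homomorphism
      (∀ g₁ ∈ FixSet b W, ∀ g₂ ∈ FixSet b W,
        ∀ h₁ h₂ : WPerpQuot b W →ₗ[k] WPerpQuot b W,
        Induces b W g₁ h₁ → Induces b W g₂ h₂ → Induces b W (g₁ ∘ₗ g₂) (h₁ ∘ₗ h₂)) ∧
      -- surjectivity
      (∀ h : WPerpQuot b W →ₗ[k] WPerpQuot b W, Function.Bijective h →
        (∀ u v : WPerpQuot b W, b' (h u) (h v) = b' u v) →
        ∃ g ∈ FixSet b W, Induces b W g h) ∧
      -- the kernel
      (∀ g ∈ FixSet b W,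
        (Induces b W g LinearMap.id ↔ ∀ x ∈ perp b W, g x - x ∈ W ⊓ perp b W)) := by
  have hpp := perp_perp halt hnd W
  refine ⟨bQ b W halt, bQ_apply b W halt, ?_, ?_, ?_, ?_, ?_, ?_, ?_⟩
  · -- alternating
    intro u
    obtain ⟨x, rfl⟩ := Submodule.Quotient.mk_surjective _ u
    rw [bQ_apply]
    exact halt _
  · -- nondegenerate
    intro u hu
    obtain ⟨x, rfl⟩ := Submodule.Quotient.mk_surjective _ u
    have hx : (x:V) ∈ W := by
      have hmem : (x:V) ∈ perp b (perp b W) := by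
        intro y hy
        have := hu (Submodule.Quotient.mk ⟨y, hy⟩)
        rwa [bQ_apply] at this
      rwa [hpp] at hmem
    rw [Submodule.Quotient.mk_eq_zero]
    exact ⟨hx, x.2⟩
  · -- preservation
    intro g hg
    refine ⟨fix_preserves b W hg, ?_⟩
    intro x hx
    rw [hg.2.2 _ hx.1]
    exact hx
  · -- induced isometry
    intro g hg
    refine ⟨hInd b W hg, ?_, ?_, hInd_induces b W hg⟩
    · have hinj : Function.Injective (hInd b W hg) := by
        rw [← LinearMap.ker_eq_bot]
        rw [Submodule.eq_bot_iff]
        intro u hu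
        rw [LinearMap.mem_ker] at hu
        obtain ⟨x, rfl⟩ := Submodule.Quotient.mk_surjective _ u
        rw [hInd_apply, Submodule.Quotient.mk_eq_zero] at hu
        replace hu : g (x:V) ∈ W ⊓ perp b W := hu
        have h1 : g (g (x:V)) = g (x:V) := hg.2.2 _ hu.1
        have h2 : g (x:V) = (x:V) := hg.1.1 h1
        rw [Submodule.Quotient.mk_eq_zero]
        show (x:V) ∈ W ⊓ perp b W
        rwa [← h2]
      exact ⟨hinj, LinearMap.injective_iff_surjective.mp hinj⟩
    · intro u v
      obtain ⟨x, rfl⟩ := Submodule.Quotient.mk_surjective _ u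
      obtain ⟨y, rfl⟩ := Submodule.Quotient.mk_surjective _ v
      rw [hInd_apply, hInd_apply, bQ_apply, bQ_apply]
      exact hg.2.1 ↑x ↑y
  · -- group homomorphism
    intro g₁ hg₁ g₂ hg₂ h₁ h₂ hi₁ hi₂ x y hxy
    have hx2 : g₂ (x:V) ∈ perp b W := fix_preserves b W hg₂ ↑x x.2
    have e2 : h₂ (Submodule.Quotient.mk x) = Submodule.Quotient.mk ⟨g₂ ↑x, hx2⟩ :=
      hi₂ x ⟨g₂ ↑x, hx2⟩ rfl
    have e1 : h₁ (Submodule.Quotient.mk (⟨g₂ ↑x, hx2⟩ : ↥(perp b W))) =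
        Submodule.Quotient.mk y := hi₁ ⟨g₂ ↑x, hx2⟩ y hxy
    simp only [LinearMap.comp_apply, e2, e1]
  · -- surjectivity
    intro h hb hi
    exact surj_lift b W halt hnd h hb hi
  · -- kernel
    intro g hg
    constructor
    · intro hi x hx
      have hgx : g x ∈ perp b W := fix_preserves b W hg x hx
      have := hi ⟨x, hx⟩ ⟨g x, hgx⟩ rfl
      rw [LinearMap.id_apply, Submodule.Quotient.eq] at this
      replace this : x - g x ∈ W ⊓ perp b W := this
      have h2 := (W ⊓ perp b W).neg_mem this
      simpa using h2
    · intro hk x y hxy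
      rw [LinearMap.id_apply, Submodule.Quotient.eq]
      have h2 := (W ⊓ perp b W).neg_mem (hk ↑x x.2)
      rw [hxy] at h2
      have h3 : (x:V) - y ∈ W ⊓ perp b W := by simpa using h2
      exact h3
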